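/- arXiv:1704.01862 — 2 statements merged into one kernel-verified Lean document; each statement's English description precedes it below -/
import Mathlib

section
/- Let X ⊆ ℝ^d be finite nonempty, M a positive integer and δ > 0. Let s₁,…,s_M be drawn independently and uniformly at random (with replacement) from X and set μS = (1/M)·Σ_{i=1}^M s_i. Then Pr[ Φ({μS},X) ≤ (1 + 1/(δM))·Δ₁(X) ] ≥ 1 − δ. -/
open Finset
open scoped BigOperators
open Classical

noncomputable section

/-- Points of `ℝ^d`. -/
abbrev Pt (d : ℕ) := EuclideanSpace ℝ (Fin d)

/-- `Φ(C, X) = Σ_{x ∈ X} min_{c ∈ C} ‖x - c‖²`. -/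
noncomputable def Phi {d : ℕ} (C X : Finset (Pt d)) : ℝ :=
  ∑ x ∈ X, sInf ((fun c => ‖x - c‖ ^ 2) '' (C : Set (Pt d)))

/-- The centroid `μ(X)` of a finite set of points. -/
noncomputable def ctr {d : ℕ} (X : Finset (Pt d)) : Pt d :=
  (X.card : ℝ)⁻¹ • ∑ x ∈ X, x

/-- `Δ₁(X) = Φ({μ(X)}, X)`. -/
noncomputable def Delta1 {d : ℕ} (X : Finset (Pt d)) : ℝ := Phi {ctr X} X

/-- `Δ_k(X)`: the optimal `k`-means cost of `X`. -/
noncomputable def DeltaK {d : ℕ} (k : ℕ) (X : Finset (Pt d)) : ℝ :=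
  sInf ((fun C => Phi C X) '' {C : Finset (Pt d) | C.card = k})

/-- `X₁, …, X_k` is an optimal `k`-means partition of `X`. -/
def IsOptPartition {d : ℕ} (k : ℕ) (X : Finset (Pt d)) (Xs : Fin k → Finset (Pt d)) : Prop :=
  (∀ j, (Xs j).Nonempty) ∧
  (∀ j l, j ≠ l → Disjoint (Xs j) (Xs l)) ∧
  Finset.univ.biUnion Xs = X ∧
  ∑ j, Delta1 (Xs j) = DeltaK k X

/-- `X` is `(k, ε)`-irreducible: `Δ_{k-1}(X) ≥ (1+ε)·Δ_k(X)`. -/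
def KIrreducible {d : ℕ} (k : ℕ) (ε : ℝ) (X : Finset (Pt d)) : Prop :=
  (1 + ε) * DeltaK k X ≤ DeltaK (k - 1) X

/-- The invariant `P(i)`: `Ci` consists of the centers `c r` for `r < i` (clusters reindexed
so that the covered clusters come first), each `c r` is a `(1 + ε/16)`-good center for the
optimal cluster `Xs r`, and `Φ(Ci, X) > 0`. -/
def InvariantP {d k : ℕ} (ε : ℝ) (X : Finset (Pt d)) (Xs : Fin k → Finset (Pt d))
    (i : ℕ) (c : Fin k → Pt d) (Ci : Finset (Pt d)) : Prop :=
  Ci = Finset.image c (Finset.univ.filter (fun r : Fin k => r.val < i)) ∧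
  (∀ r : Fin k, r.val < i → Phi {c r} (Xs r) ≤ (1 + ε / 16) * Delta1 (Xs r)) ∧
  0 < Phi Ci X

/-!
By the parallel-axis identity `Φ({c}, X) = Δ₁(X) + |X|·‖c − μ(X)‖²`, the excess cost of the sample
mean is `|X|·‖μS − μ(X)‖²`. Averaged over all `|X|^M` samples, the cross terms of
`‖Σᵢ (sᵢ − μ(X))‖²` cancel because the deviations `x − μ(X)` sum to zero, so the expected excess
is `Δ₁(X)/M`; Markov's inequality then bounds the probability that it exceeds `Δ₁(X)/(δM)` by `δ`.
-/

open scoped RealInnerProductSpace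

theorem Finset.one_sub_mul_card_le_card_filter_mul_le_sum_div {ι : Type*} (S : Finset ι)
    {q : ι → ℝ} (hq : ∀ s ∈ S, 0 ≤ q s) {δ : ℝ} (hδ : 0 ≤ δ) :
    (1 - δ) * #S ≤ #{s ∈ S | δ * q s ≤ (∑ x ∈ S, q x) / #S} := by
  set A := (∑ x ∈ S, q x) / #S
  set B := S.filter fun s => ¬ δ * q s ≤ A
  have hsplit : (#{s ∈ S | δ * q s ≤ A} : ℝ) + #B = #S := by
    exact_mod_cast card_filter_add_card_filter_not _
  suffices (#B : ℝ) ≤ δ * #S by linarith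
  obtain hB | ⟨b, hb⟩ := B.eq_empty_or_nonempty
  · simp only [hB, card_empty, Nat.cast_zero]
    positivity
  have hlt : ∀ s ∈ B, A < δ * q s := fun s hs => not_le.mp (mem_filter.mp hs).2
  have hT : ∑ x ∈ S, q x = #S * A := by
    rw [mul_div_cancel₀]
    exact_mod_cast (card_pos.mpr ⟨b, filter_subset _ _ hb⟩).ne'
  have hBA : (#B : ℝ) * A ≤ δ * #S * A := calc
    (#B : ℝ) * A = ∑ _s ∈ B, A := by rw [sum_const, nsmul_eq_mul]
    _ ≤ ∑ s ∈ B, δ * q s := sum_le_sum fun s hs => (hlt s hs).le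
    _ ≤ ∑ s ∈ S, δ * q s :=
      sum_le_sum_of_subset_of_nonneg (filter_subset _ _) fun s hs _ => mul_nonneg hδ (hq s hs)
    _ = δ * #S * A := by rw [← mul_sum, hT, mul_assoc]
  -- a bad sample `b` forces `A < δ * q b ≤ δ * #S * A`, so `A ≠ 0`
  have hA : 0 < A := by
    have := (hlt b hb).trans_le
      (mul_le_mul_of_nonneg_left (single_le_sum hq (mem_filter.mp hb).1) hδ)
    rw [hT] at this
    have hS : (0 : ℝ) ≤ #S := Nat.cast_nonneg _
    nlinarith [mul_nonneg hδ hS, div_nonneg (sum_nonneg hq) hS]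
  exact le_of_mul_le_mul_right hBA hA

theorem card_mul_sum_pi_norm_sum_sq {E α : Type*} [NormedAddCommGroup E] [InnerProductSpace ℝ E]
    [Fintype α] {g : α → E} (hg : ∑ x, g x = 0) (M : ℕ) :
    Fintype.card α * ∑ s : Fin M → α, ‖∑ i, g (s i)‖ ^ 2
      = M * Fintype.card α ^ M * ∑ x, ‖g x‖ ^ 2 := by
  induction M with
  | zero => simp
  | succ M ih =>
    have hcross : ∑ x, ∑ t : Fin M → α, ⟪g x, ∑ i, g (t i)⟫ = 0 := by
      rw [sum_comm]
      simp only [← sum_inner, hg, inner_zero_left, sum_const_zero]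
    have hsplit : ∑ s : Fin (M + 1) → α, ‖∑ i, g (s i)‖ ^ 2
        = ∑ x, ∑ t : Fin M → α, (‖g x‖ ^ 2 + 2 * ⟪g x, ∑ i, g (t i)⟫ + ‖∑ i, g (t i)‖ ^ 2) := by
      rw [← (Fin.consEquiv fun _ => α).sum_comp, Fintype.sum_prod_type]
      simp only [Fin.consEquiv_apply, Fin.sum_univ_succ, Fin.cons_zero, Fin.cons_succ,
        norm_add_sq_real]
    rw [hsplit]
    simp only [sum_add_distrib, ← mul_sum, hcross, sum_const, card_univ, Fintype.card_fun,
      Fintype.card_fin, nsmul_eq_mul, ih]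
    push_cast
    ring

theorem Phi_singleton {d : ℕ} (c : Pt d) (X : Finset (Pt d)) :
    Phi {c} X = ∑ x ∈ X, ‖x - c‖ ^ 2 := by
  simp [Phi]

theorem sum_sub_ctr {d : ℕ} {X : Finset (Pt d)} (hX : X.Nonempty) :
    ∑ x ∈ X, (x - ctr X) = 0 := by
  rw [sum_sub_distrib, sum_const, ← Nat.cast_smul_eq_nsmul ℝ, ctr, smul_smul,
    mul_inv_cancel₀ (by simpa using hX.card_pos.ne'), one_smul, sub_self]

theorem Phi_singleton_eq_Delta1_add {d : ℕ} {X : Finset (Pt d)} (hX : X.Nonempty) (c : Pt d) :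
    Phi {c} X = Delta1 X + X.card * ‖c - ctr X‖ ^ 2 := by
  have hcross : ∑ x ∈ X, 2 * ⟪x - ctr X, ctr X - c⟫ = 0 := by
    rw [← mul_sum, ← sum_inner, sum_sub_ctr hX, inner_zero_left, mul_zero]
  have hexpand : ∀ x ∈ X, ‖x - c‖ ^ 2
      = ‖x - ctr X‖ ^ 2 + 2 * ⟪x - ctr X, ctr X - c⟫ + ‖ctr X - c‖ ^ 2 := fun x _ => by
    rw [← norm_add_sq_real, sub_add_sub_cancel]
  rw [Delta1, Phi_singleton, Phi_singleton, sum_congr rfl hexpand, sum_add_distrib,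
    sum_add_distrib, hcross, sum_const, nsmul_eq_mul, norm_sub_rev c, add_zero]

theorem sum_Phi_sampleMean {d : ℕ} {X : Finset (Pt d)} (hX : X.Nonempty) {M : ℕ} (hM : M ≠ 0) :
    ∑ s : Fin M → X, Phi {(M : ℝ)⁻¹ • ∑ i, (s i : Pt d)} X
      = X.card ^ M * ((1 + 1 / M) * Delta1 X) := by
  set g : X → Pt d := fun x => x - ctr X
  have hg : ∑ x, g x = 0 := (sum_coe_sort X (· - ctr X)).trans (sum_sub_ctr hX)
  have hgD : ∑ x, ‖g x‖ ^ 2 = Delta1 X := by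
    rw [Delta1, Phi_singleton]; exact sum_coe_sort X (‖· - ctr X‖ ^ 2)
  have hdev : ∀ s : Fin M → X,
      (M : ℝ)⁻¹ • ∑ i, (s i : Pt d) - ctr X = (M : ℝ)⁻¹ • ∑ i, g (s i) := by
    intro s
    rw [sum_sub_distrib, smul_sub, sum_const, card_univ, Fintype.card_fin,
      ← Nat.cast_smul_eq_nsmul ℝ, smul_smul, inv_mul_cancel₀ (by exact_mod_cast hM), one_smul]
  have hvar := card_mul_sum_pi_norm_sum_sq hg M
  rw [Fintype.card_coe, hgD] at hvar
  have hsq : ∀ s : Fin M → X, (X.card : ℝ) * ‖(M : ℝ)⁻¹ • ∑ i, g (s i)‖ ^ 2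
      = (M : ℝ)⁻¹ ^ 2 * (X.card * ‖∑ i, g (s i)‖ ^ 2) := fun s => by
    rw [norm_smul, norm_inv, Real.norm_natCast]; ring
  simp only [Phi_singleton_eq_Delta1_add hX, hdev, hsq, sum_add_distrib, ← mul_sum, hvar,
    sum_const, card_univ, Fintype.card_fun, Fintype.card_fin, Fintype.card_coe, nsmul_eq_mul,
    Nat.cast_pow]
  field_simp

/-- **Inaba et al..** Let `s₁, …, s_M` be drawn independently and uniformly
(with replacement) from the finite nonempty set `X ⊆ ℝ^d`, and let
`μS = (1/M)·Σᵢ sᵢ`. Then `Pr[Φ({μS}, X) ≤ (1 + 1/(δM))·Δ₁(X)] ≥ 1 − δ`.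
The probability of an event `E ⊆ (Fin M → X)` is `Σ_{s ∈ E} (1/|X|)^M`. -/
theorem stmt_3 {d : ℕ} (X : Finset (Pt d)) (hX : X.Nonempty) (M : ℕ) (hM : 0 < M)
    (δ : ℝ) (hδ : 0 < δ) :
    1 - δ ≤
      ∑ s ∈ (Finset.univ : Finset (Fin M → {x // x ∈ X})).filter
          (fun s => Phi {(M : ℝ)⁻¹ • ∑ i, (s i : Pt d)} X ≤ (1 + 1 / (δ * M)) * Delta1 X),
        ((X.card : ℝ))⁻¹ ^ M := by
  set S : Finset (Fin M → X) := univ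
  set q : (Fin M → X) → ℝ := fun s => Phi {(M : ℝ)⁻¹ • ∑ i, (s i : Pt d)} X - Delta1 X
  have hn : (0 : ℝ) < X.card := by exact_mod_cast hX.card_pos
  have hS : (#S : ℝ) = X.card ^ M := by simp [S]
  have hq : ∀ s ∈ S, 0 ≤ q s := fun s _ => by
    simp only [q, Phi_singleton_eq_Delta1_add hX, add_sub_cancel_left]; positivity
  have hmean : (∑ s ∈ S, q s) / #S = Delta1 X / M := by
    rw [hS]
    simp only [S, q, sum_sub_distrib, sum_Phi_sampleMean hX hM.ne', sum_const, card_univ,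
      Fintype.card_fun, Fintype.card_fin, Fintype.card_coe, nsmul_eq_mul]
    push_cast; field_simp; ring
  have hgood : {s ∈ S | δ * q s ≤ (∑ x ∈ S, q x) / #S} ⊆ {s ∈ S |
      Phi {(M : ℝ)⁻¹ • ∑ i, (s i : Pt d)} X ≤ (1 + 1 / (δ * M)) * Delta1 X} := by
    refine monotone_filter_right _ fun s _ h => ?_
    rw [hmean, ← le_div_iff₀' hδ, div_div] at h
    linarith [show q s = Phi {(M : ℝ)⁻¹ • ∑ i, (s i : Pt d)} X - Delta1 X from rfl,
      show (1 + 1 / (δ * M)) * Delta1 X = Delta1 X + Delta1 X / (M * δ) by ring]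
  have hmarkov := one_sub_mul_card_le_card_filter_mul_le_sum_div S hq hδ.le
  rw [sum_const, nsmul_eq_mul]
  calc 1 - δ = (1 - δ) * #S * (X.card : ℝ)⁻¹ ^ M := by
        rw [hS, mul_assoc, ← mul_pow, mul_inv_cancel₀ hn.ne', one_pow, mul_one]
    _ ≤ _ := by gcongr; exact hmarkov.trans (by exact_mod_cast card_le_card hgood)
end
end

section
/- Let 0 < ε ≤ 1/2, let X ⊆ ℝ^d be finite and (k,ε)-irreducible with optimal k-means partition X₁,…,X_k, let 1 ≤ i < k, and let C_i be a set of i centers satisfying the invariant P(i). Then Φ(C_i, X_{i+1} ∪ … ∪ X_k) ≥ (ε/4)·Φ(C_i, X). -/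
open Finset
open scoped BigOperators
open Classical

noncomputable section

/-!
If the clusters `X_{i+1}, …, X_k` were cheap to serve by `C_i`, one could drop the centroid of
`X_{i+1}`, serve that cluster by `C_i`, and keep the centroids of `X_{i+2}, …, X_k`: this gives
`k - 1` centers of cost at most `Φ(C_i, X) + Σ_{r > i+1} Δ₁(X_r)`. Irreducibility bounds this
from below by `(1 + ε) Δ_k(X)`, while `P(i)` bounds the cost of `C_i` on the covered clusters by
`(1 + ε/16) Σ_{r ≤ i} Δ₁(X_r)`, so the uncovered clusters must carry at least
`(15ε/16) Σ_{r ≤ i} Δ₁(X_r)`, which is an `ε/4` fraction of `Φ(C_i, X)`.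
-/

section Cost

open Function

variable {d : ℕ}

lemma infinite_of_disjoint {A B : Finset (Pt d)} (hA : A.Nonempty) (hB : B.Nonempty)
    (hAB : Disjoint A B) : Infinite (Pt d) :=
  have : Nontrivial (Pt d) := by
    obtain ⟨x, hx⟩ := hA
    obtain ⟨y, hy⟩ := hB
    exact ⟨x, y, fun hxy => disjoint_left.mp hAB hx (hxy ▸ hy)⟩
  PreconnectedSpace.infinite

lemma phi_nonneg (C X : Finset (Pt d)) : 0 ≤ Phi C X :=
  sum_nonneg fun _ _ => Real.sInf_nonneg (by rintro y ⟨_, -, rfl⟩; positivity)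

lemma phi_le_phi_of_subset {C C' : Finset (Pt d)} (hC : C.Nonempty) (h : C ⊆ C')
    (X : Finset (Pt d)) : Phi C' X ≤ Phi C X :=
  sum_le_sum fun _ _ => csInf_le_csInf ⟨0, by rintro y ⟨_, -, rfl⟩; positivity⟩
    ((coe_nonempty.mpr hC).image _) (Set.image_mono (by exact_mod_cast h))

lemma phi_le_phi_singleton {C : Finset (Pt d)} {c : Pt d} (hc : c ∈ C) (X : Finset (Pt d)) :
    Phi C X ≤ Phi {c} X :=
  phi_le_phi_of_subset (singleton_nonempty c) (singleton_subset_iff.mpr hc) X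

lemma phi_biUnion {ι : Type*} {Xs : ι → Finset (Pt d)} (hdisj : Pairwise (Disjoint on Xs))
    (C : Finset (Pt d)) (s : Finset ι) : Phi C (s.biUnion Xs) = ∑ j ∈ s, Phi C (Xs j) :=
  sum_biUnion fun _ _ _ _ hjl => hdisj hjl

lemma deltaK_le_phi [Infinite (Pt d)] {m : ℕ} {C : Finset (Pt d)} (hC : C.Nonempty)
    (hm : C.card ≤ m) (X : Finset (Pt d)) : DeltaK m X ≤ Phi C X := by
  obtain ⟨C', hCC', hC'⟩ := Infinite.exists_superset_card_eq C m hm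
  calc DeltaK m X ≤ Phi C' X :=
        csInf_le ⟨0, by rintro y ⟨_, -, rfl⟩; exact phi_nonneg _ _⟩ ⟨C', hC', rfl⟩
    _ ≤ Phi C X := phi_le_phi_of_subset hC hCC' X

/-- The witness is `C` together with the centroids of the clusters indexed by `R`. -/
lemma deltaK_le_phi_add_sum_delta1 [Infinite (Pt d)] {ι : Type*} [Fintype ι]
    {X : Finset (Pt d)} {Xs : ι → Finset (Pt d)} (hdisj : Pairwise (Disjoint on Xs))
    (hunion : univ.biUnion Xs = X) {m : ℕ} {C : Finset (Pt d)} (hC : C.Nonempty)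
    (R : Finset ι) (hm : C.card + R.card ≤ m) :
    DeltaK m X ≤ Phi C X + ∑ r ∈ R, Delta1 (Xs r) := by
  set C' := C ∪ R.image fun r => ctr (Xs r)
  have hcard : C'.card ≤ m := (card_union_le _ _).trans (by grw [card_image_le]; exact hm)
  have hCC' : C ⊆ C' := subset_union_left
  have hR : ∑ r ∈ R, Phi C' (Xs r) ≤ ∑ r ∈ R, Delta1 (Xs r) :=
    sum_le_sum fun r hr => phi_le_phi_singleton (mem_union_right _ (mem_image_of_mem _ hr)) _
  have hRc : ∑ r ∈ Rᶜ, Phi C' (Xs r) ≤ Phi C X :=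
    calc ∑ r ∈ Rᶜ, Phi C' (Xs r) ≤ ∑ r ∈ Rᶜ, Phi C (Xs r) :=
          sum_le_sum fun r _ => phi_le_phi_of_subset hC hCC' _
      _ ≤ ∑ r, Phi C (Xs r) := sum_le_univ_sum_of_nonneg fun r => phi_nonneg _ _
      _ = Phi C X := by rw [← hunion, phi_biUnion hdisj]
  calc DeltaK m X ≤ Phi C' X := deltaK_le_phi (hC.mono hCC') hcard X
    _ = ∑ r ∈ R, Phi C' (Xs r) + ∑ r ∈ Rᶜ, Phi C' (Xs r) := by
        rw [sum_add_sum_compl, ← hunion, phi_biUnion hdisj]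
    _ ≤ Phi C X + ∑ r ∈ R, Delta1 (Xs r) := by linarith

lemma phi_image_biUnion_le {ι : Type*} {Xs : ι → Finset (Pt d)}
    (hdisj : Pairwise (Disjoint on Xs)) (c : ι → Pt d) (s : Finset ι) (a : ℝ)
    (hgood : ∀ r ∈ s, Phi {c r} (Xs r) ≤ a * Delta1 (Xs r)) :
    Phi (s.image c) (s.biUnion Xs) ≤ a * ∑ r ∈ s, Delta1 (Xs r) := by
  rw [phi_biUnion hdisj, mul_sum]
  exact sum_le_sum fun r hr => (phi_le_phi_singleton (mem_image_of_mem c hr) _).trans (hgood r hr)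

end Cost

lemma eps_div_four_mul_add_le {ε A B V U : ℝ} (hε0 : 0 < ε) (hε : ε ≤ 1 / 2) (hB : 0 ≤ B)
    (hU : 0 ≤ U) (hV : V ≤ (1 + ε / 16) * A) (hirr : (1 + ε) * (A + B) ≤ V + U + B) :
    ε / 4 * (V + U) ≤ U := by
  nlinarith [mul_nonneg hε0.le hB, mul_nonneg hε0.le hU]

/-- Under the invariant `P(i)` (clusters reindexed so the covered clusters
are `X₁, …, X_i`), the uncovered clusters carry at least an `ε/4` fraction of the current
cost: `Φ(C_i, X_{i+1} ∪ … ∪ X_k) ≥ (ε/4)·Φ(C_i, X)`. -/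
theorem stmt_7 {d k : ℕ} (ε : ℝ) (hε0 : 0 < ε) (hε : ε ≤ 1 / 2)
    (X : Finset (Pt d)) (hirr : KIrreducible k ε X)
    (Xs : Fin k → Finset (Pt d)) (hopt : IsOptPartition k X Xs)
    (i : ℕ) (hi : 1 ≤ i) (hik : i < k)
    (c : Fin k → Pt d) (Ci : Finset (Pt d)) (hinv : InvariantP ε X Xs i c Ci) :
    (ε / 4) * Phi Ci X ≤
      Phi Ci ((Finset.univ.filter (fun j : Fin k => i ≤ j.val)).biUnion Xs) := by
  obtain ⟨rfl, hgood, -⟩ := hinv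
  obtain ⟨hne, hdisj, hunion, hopt⟩ := hopt
  set r₀ : Fin k := ⟨i, hik⟩
  have hS : univ.filter (fun r : Fin k => r.val < i) = Iio r₀ := by
    ext r; simp only [mem_filter, mem_univ, true_and, mem_Iio]; rfl
  have hT : univ.filter (fun j : Fin k => i ≤ j.val) = (Iio r₀)ᶜ := by
    ext r; simp only [mem_filter, mem_univ, true_and, mem_compl, mem_Iio, not_lt]; rfl
  rw [hS, hT]
  set C := image c (Iio r₀)
  have h0 : (⟨0, by omega⟩ : Fin k) < r₀ := Fin.mk_lt_mk.mpr (by omega)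
  have hC : C.Nonempty := ⟨c _, mem_image_of_mem c (mem_Iio.mpr h0)⟩
  have := infinite_of_disjoint (hne _) (hne r₀) (hdisj _ _ h0.ne)
  have hcard : C.card + (Ioi r₀).card ≤ k - 1 := by
    grw [card_image_le, Fin.card_Iio, Fin.card_Ioi]; simp only [r₀]; omega
  have hdrop := deltaK_le_phi_add_sum_delta1 hdisj hunion hC (Ioi r₀) hcard
  have hIoi : ∑ r ∈ Ioi r₀, Delta1 (Xs r) ≤ ∑ r ∈ (Iio r₀)ᶜ, Delta1 (Xs r) :=
    sum_le_sum_of_subset_of_nonneg (fun r hr => by simpa using (mem_Ioi.mp hr).le)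
      fun _ _ _ => phi_nonneg _ _
  have hcovered := phi_image_biUnion_le hdisj c (Iio r₀) (1 + ε / 16) fun r hr =>
    hgood r (mem_Iio.mp hr : r < r₀)
  have hcost : Phi C X = Phi C ((Iio r₀).biUnion Xs) + Phi C ((Iio r₀)ᶜ.biUnion Xs) := by
    rw [phi_biUnion hdisj, phi_biUnion hdisj, ← hunion, phi_biUnion hdisj, sum_add_sum_compl]
  rw [KIrreducible, ← hopt, ← sum_add_sum_compl (Iio r₀)] at hirr
  have hbound : (1 + ε) *
      (∑ r ∈ Iio r₀, Delta1 (Xs r) + ∑ r ∈ (Iio r₀)ᶜ, Delta1 (Xs r)) ≤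
      Phi C ((Iio r₀).biUnion Xs) + Phi C ((Iio r₀)ᶜ.biUnion Xs) +
        ∑ r ∈ (Iio r₀)ᶜ, Delta1 (Xs r) := by
    linarith
  rw [hcost]
  exact eps_div_four_mul_add_le hε0 hε (sum_nonneg fun _ _ => phi_nonneg _ _) (phi_nonneg _ _)
    hcovered hbound
end
end
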